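/- (Asymptotics of the Liouville potential q.) With q defined as in the context, one has lim_{ξ→(−π/2)⁺} (ξ + π/2)²·q(ξ) = 2 and lim_{ξ→(π/2)⁻} (π/2 − ξ)²·q(ξ) = (N−1)(N−3)/4; moreover (N−1)(N−3)/4 > 3/4 since N > 4. -/

import Mathlib

open Set Real MeasureTheory Filter

open Topology

/-- `M(x) = exp(∫₀ˣ ℓ₁)`. -/
noncomputable def Mfun (ℓ₁ : ℝ → ℝ) (x : ℝ) : ℝ := Real.exp (∫ x' in (0:ℝ)..x, ℓ₁ x')

/-- `a(x) = x^{5/2}(1−x)^{N/2}·M(x)`. -/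
noncomputable def afun (N : ℝ) (ℓ₁ : ℝ → ℝ) (x : ℝ) : ℝ :=
  x ^ ((5:ℝ)/2) * (1 - x) ^ (N/2) * Mfun ℓ₁ x

/-- `b(x) = x^{3/2}(1−x)^{N/2−1}·M(x)`. -/
noncomputable def bfun (N : ℝ) (ℓ₁ : ℝ → ℝ) (x : ℝ) : ℝ :=
  x ^ ((3:ℝ)/2) * (1 - x) ^ (N/2 - 1) * Mfun ℓ₁ x

/-- `R = a'/a + b'/b`. -/
noncomputable def Rfun (N : ℝ) (ℓ₁ : ℝ → ℝ) (x : ℝ) : ℝ :=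
  deriv (afun N ℓ₁) x / afun N ℓ₁ x + deriv (bfun N ℓ₁) x / bfun N ℓ₁ x

/-- The Liouville potential (in the `x` variable):
`Q = L₀ + (1/4)(a/b)[R' − (1/4)R² + (a'/a)·R]` with `R = a'/a + b'/b`. -/
noncomputable def Qfun (N : ℝ) (ℓ₁ L₀ : ℝ → ℝ) (x : ℝ) : ℝ :=
  L₀ x + (1/4) * (afun N ℓ₁ x / bfun N ℓ₁ x) *
    (deriv (Rfun N ℓ₁) x - (1/4) * (Rfun N ℓ₁ x) ^ 2
      + (deriv (afun N ℓ₁) x / afun N ℓ₁ x) * Rfun N ℓ₁ x)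

/-- The Liouville potential in the variable `ξ = arcsin(2x−1)`, i.e. `x = (1+sin ξ)/2`. -/
noncomputable def qfun (N : ℝ) (ℓ₁ L₀ : ℝ → ℝ) (ξ : ℝ) : ℝ :=
  Qfun N ℓ₁ L₀ ((1 + Real.sin ξ)/2)

/- ### Auxiliary lemmas -/

lemma Mfun_pos (ℓ₁ : ℝ → ℝ) (x : ℝ) : 0 < Mfun ℓ₁ x := Real.exp_pos _

lemma afun_pos {N : ℝ} {ℓ₁ : ℝ → ℝ} {x : ℝ} (hx : x ∈ Ioo (0:ℝ) 1) : 0 < afun N ℓ₁ x := by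
  have h1 : (0:ℝ) < 1 - x := by linarith [hx.2]
  exact mul_pos (mul_pos (Real.rpow_pos_of_pos hx.1 _) (Real.rpow_pos_of_pos h1 _)) (Mfun_pos _ _)

lemma bfun_pos {N : ℝ} {ℓ₁ : ℝ → ℝ} {x : ℝ} (hx : x ∈ Ioo (0:ℝ) 1) : 0 < bfun N ℓ₁ x := by
  have h1 : (0:ℝ) < 1 - x := by linarith [hx.2]
  exact mul_pos (mul_pos (Real.rpow_pos_of_pos hx.1 _) (Real.rpow_pos_of_pos h1 _)) (Mfun_pos _ _)

lemma hasDerivAt_Mfun {ℓ₁ : ℝ → ℝ} (hℓ₁ : AnalyticOnNhd ℝ ℓ₁ (Icc 0 1)) {x : ℝ}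
    (hx : x ∈ Ioo (0:ℝ) 1) : HasDerivAt (Mfun ℓ₁) (ℓ₁ x * Mfun ℓ₁ x) x := by
  have hxI : x ∈ Icc (0:ℝ) 1 := ⟨hx.1.le, hx.2.le⟩
  have hcont : ContinuousOn ℓ₁ (Icc 0 1) := fun y hy => (hℓ₁ y hy).continuousAt.continuousWithinAt
  have hint : IntervalIntegrable ℓ₁ volume 0 x := by
    apply (hcont.mono ?_).intervalIntegrable
    rw [uIcc_of_le hx.1.le]
    exact Icc_subset_Icc le_rfl hx.2.le
  have hmeas : StronglyMeasurableAtFilter ℓ₁ (𝓝 x) volume :=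
    ContinuousOn.stronglyMeasurableAtFilter (isOpen_analyticAt ℝ ℓ₁)
      (fun y hy => hy.continuousAt.continuousWithinAt) x (hℓ₁ x hxI)
  have hI : HasDerivAt (fun y => ∫ t in (0:ℝ)..y, ℓ₁ t) (ℓ₁ x) x :=
    intervalIntegral.integral_hasDerivAt_right hint hmeas (hℓ₁ x hxI).continuousAt
  have := hI.exp
  rw [mul_comm]; exact this

lemma hasDerivAt_afun {N : ℝ} {ℓ₁ : ℝ → ℝ} (hℓ₁ : AnalyticOnNhd ℝ ℓ₁ (Icc 0 1)) {x : ℝ}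
    (hx : x ∈ Ioo (0:ℝ) 1) :
    HasDerivAt (afun N ℓ₁) ((5/(2*x) - (N/2)/(1-x) + ℓ₁ x) * afun N ℓ₁ x) x := by
  have hx0 : (0:ℝ) < x := hx.1
  have hx1 : (0:ℝ) < 1 - x := by linarith [hx.2]
  have h1 : HasDerivAt (fun y : ℝ => y ^ ((5:ℝ)/2)) ((5:ℝ)/2 * x ^ ((5:ℝ)/2 - 1)) x :=
    Real.hasDerivAt_rpow_const (Or.inl hx0.ne')
  have hbase : HasDerivAt (fun y : ℝ => 1 - y) (-1) x := by
    simpa using (hasDerivAt_id x).const_sub 1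
  have h2 : HasDerivAt (fun y : ℝ => (1 - y) ^ (N/2)) (N/2 * (1-x) ^ (N/2 - 1) * (-1)) x :=
    (Real.hasDerivAt_rpow_const (p := N/2) (Or.inl hx1.ne')).comp x hbase
  have h3 := hasDerivAt_Mfun hℓ₁ hx
  have H := (h1.mul h2).mul h3
  have hfa : afun N ℓ₁ = fun y : ℝ => y ^ ((5:ℝ)/2) * (1 - y) ^ (N/2) * Mfun ℓ₁ y := rfl
  rw [hfa]
  refine H.congr_deriv ?_
  have e1 : x ^ ((5:ℝ)/2 - 1) = x ^ ((5:ℝ)/2) / x := by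
    rw [Real.rpow_sub hx0, Real.rpow_one]
  have e2 : (1-x) ^ (N/2 - 1) = (1-x) ^ (N/2) / (1-x) := by
    rw [Real.rpow_sub hx1, Real.rpow_one]
  rw [e1, e2]
  beta_reduce
  simp only [Pi.mul_apply]
  field_simp
  ring

lemma hasDerivAt_bfun {N : ℝ} {ℓ₁ : ℝ → ℝ} (hℓ₁ : AnalyticOnNhd ℝ ℓ₁ (Icc 0 1)) {x : ℝ}
    (hx : x ∈ Ioo (0:ℝ) 1) :
    HasDerivAt (bfun N ℓ₁) ((3/(2*x) - (N/2-1)/(1-x) + ℓ₁ x) * bfun N ℓ₁ x) x := by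
  have hx0 : (0:ℝ) < x := hx.1
  have hx1 : (0:ℝ) < 1 - x := by linarith [hx.2]
  have h1 : HasDerivAt (fun y : ℝ => y ^ ((3:ℝ)/2)) ((3:ℝ)/2 * x ^ ((3:ℝ)/2 - 1)) x :=
    Real.hasDerivAt_rpow_const (Or.inl hx0.ne')
  have hbase : HasDerivAt (fun y : ℝ => 1 - y) (-1) x := by
    simpa using (hasDerivAt_id x).const_sub 1
  have h2 : HasDerivAt (fun y : ℝ => (1 - y) ^ (N/2-1)) ((N/2-1) * (1-x) ^ (N/2 - 1 - 1) * (-1)) x :=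
    (Real.hasDerivAt_rpow_const (p := N/2-1) (Or.inl hx1.ne')).comp x hbase
  have h3 := hasDerivAt_Mfun hℓ₁ hx
  have H := (h1.mul h2).mul h3
  have hfb : bfun N ℓ₁ = fun y : ℝ => y ^ ((3:ℝ)/2) * (1 - y) ^ (N/2-1) * Mfun ℓ₁ y := rfl
  rw [hfb]
  refine H.congr_deriv ?_
  have e1 : x ^ ((3:ℝ)/2 - 1) = x ^ ((3:ℝ)/2) / x := by
    rw [Real.rpow_sub hx0, Real.rpow_one]
  have e2 : (1-x) ^ (N/2 - 1 - 1) = (1-x) ^ (N/2 - 1) / (1-x) := by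
    rw [Real.rpow_sub hx1, Real.rpow_one]
  rw [e1, e2]
  beta_reduce
  simp only [Pi.mul_apply]
  field_simp
  ring

lemma deriv_afun_div {N : ℝ} {ℓ₁ : ℝ → ℝ} (hℓ₁ : AnalyticOnNhd ℝ ℓ₁ (Icc 0 1)) {x : ℝ}
    (hx : x ∈ Ioo (0:ℝ) 1) :
    deriv (afun N ℓ₁) x / afun N ℓ₁ x = 5/(2*x) - (N/2)/(1-x) + ℓ₁ x := by
  rw [(hasDerivAt_afun hℓ₁ hx).deriv, mul_div_assoc, div_self (afun_pos hx).ne', mul_one]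

lemma deriv_bfun_div {N : ℝ} {ℓ₁ : ℝ → ℝ} (hℓ₁ : AnalyticOnNhd ℝ ℓ₁ (Icc 0 1)) {x : ℝ}
    (hx : x ∈ Ioo (0:ℝ) 1) :
    deriv (bfun N ℓ₁) x / bfun N ℓ₁ x = 3/(2*x) - (N/2-1)/(1-x) + ℓ₁ x := by
  rw [(hasDerivAt_bfun hℓ₁ hx).deriv, mul_div_assoc, div_self (bfun_pos hx).ne', mul_one]

lemma Rfun_eq {N : ℝ} {ℓ₁ : ℝ → ℝ} (hℓ₁ : AnalyticOnNhd ℝ ℓ₁ (Icc 0 1)) {x : ℝ}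
    (hx : x ∈ Ioo (0:ℝ) 1) :
    Rfun N ℓ₁ x = 4/x - (N-1)/(1-x) + 2 * ℓ₁ x := by
  have hx0 : (0:ℝ) < x := hx.1
  have hx1 : (0:ℝ) < 1 - x := by linarith [hx.2]
  rw [Rfun, deriv_afun_div hℓ₁ hx, deriv_bfun_div hℓ₁ hx]
  field_simp
  ring

lemma hasDerivAt_Rfun {N : ℝ} {ℓ₁ : ℝ → ℝ} (hℓ₁ : AnalyticOnNhd ℝ ℓ₁ (Icc 0 1)) {x : ℝ}
    (hx : x ∈ Ioo (0:ℝ) 1) :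
    HasDerivAt (Rfun N ℓ₁) (-(4/x^2) - (N-1)/(1-x)^2 + 2 * deriv ℓ₁ x) x := by
  have hx0 : (0:ℝ) < x := hx.1
  have hx1 : (0:ℝ) < 1 - x := by linarith [hx.2]
  have hxI : x ∈ Icc (0:ℝ) 1 := ⟨hx.1.le, hx.2.le⟩
  have hl : HasDerivAt ℓ₁ (deriv ℓ₁ x) x := (hℓ₁ x hxI).differentiableAt.hasDerivAt
  have h1 : HasDerivAt (fun y : ℝ => 4/y) (4 * -(x^2)⁻¹) x := by
    simpa [div_eq_mul_inv] using (hasDerivAt_inv hx0.ne').const_mul 4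
  have hbase : HasDerivAt (fun y : ℝ => 1 - y) (-1) x := by
    simpa using (hasDerivAt_id x).const_sub 1
  have h2 : HasDerivAt (fun y : ℝ => (N-1) * (1-y)⁻¹) ((N-1) * (-((1-x)^2)⁻¹ * -1)) x := by
    exact (((hasDerivAt_inv hx1.ne').comp x hbase)).const_mul (N-1)
  have h2' : HasDerivAt (fun y : ℝ => (N-1)/(1-y)) ((N-1) * (-((1-x)^2)⁻¹ * -1)) x := by
    simpa [div_eq_mul_inv] using h2
  have hE : HasDerivAt (fun y : ℝ => 4/y - (N-1)/(1-y) + 2 * ℓ₁ y)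
      (-(4/x^2) - (N-1)/(1-x)^2 + 2 * deriv ℓ₁ x) x := by
    have H := (h1.sub h2').add (hl.const_mul 2)
    refine H.congr_deriv ?_
    ring
  apply hE.congr_of_eventuallyEq
  filter_upwards [isOpen_Ioo.mem_nhds hx] with y hy
  exact Rfun_eq hℓ₁ hy

lemma ab_div {N : ℝ} {ℓ₁ : ℝ → ℝ} {x : ℝ} (hx : x ∈ Ioo (0:ℝ) 1) :
    afun N ℓ₁ x / bfun N ℓ₁ x = x * (1-x) := by
  have hx0 : (0:ℝ) < x := hx.1
  have hx1 : (0:ℝ) < 1 - x := by linarith [hx.2]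
  rw [afun, bfun, show (5:ℝ)/2 = 3/2 + 1 by norm_num, Real.rpow_add hx0, Real.rpow_one,
      show N/2 = (N/2 - 1) + 1 by ring, Real.rpow_add hx1, Real.rpow_one]
  rw [show N / 2 - 1 + 1 - 1 = N/2 - 1 by ring]
  have e1 := (Real.rpow_pos_of_pos hx0 ((3:ℝ)/2)).ne'
  have e2 := (Real.rpow_pos_of_pos hx1 (N/2 - 1)).ne'
  have e3 := (Real.exp_pos (∫ x' in (0:ℝ)..x, ℓ₁ x')).ne'
  field_simp [Mfun]

lemma Qfun_eq {N : ℝ} {ℓ₁ L₀ : ℝ → ℝ} (hℓ₁ : AnalyticOnNhd ℝ ℓ₁ (Icc 0 1)) {x : ℝ}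
    (hx : x ∈ Ioo (0:ℝ) 1) :
    Qfun N ℓ₁ L₀ x = L₀ x + (1/4) * (x * (1-x)) *
      ((-(4/x^2) - (N-1)/(1-x)^2 + 2 * deriv ℓ₁ x)
        - (1/4) * (4/x - (N-1)/(1-x) + 2 * ℓ₁ x)^2
        + (5/(2*x) - (N/2)/(1-x) + ℓ₁ x) * (4/x - (N-1)/(1-x) + 2 * ℓ₁ x)) := by
  rw [Qfun, ab_div hx, (hasDerivAt_Rfun hℓ₁ hx).deriv, Rfun_eq hℓ₁ hx, deriv_afun_div hℓ₁ hx]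

lemma tendsto_xQ {N : ℝ} {ℓ₁ L₀ : ℝ → ℝ} (hℓ₁ : AnalyticOnNhd ℝ ℓ₁ (Icc 0 1))
    (hL₀ : AnalyticOnNhd ℝ L₀ (Icc 0 1)) :
    Tendsto (fun x => x * Qfun N ℓ₁ L₀ x) (𝓝[Ioo (0:ℝ) 1] 0) (𝓝 (1/2)) := by
  set G : ℝ → ℝ := fun x => x * L₀ x + (1/4) * (2*(1-x) + ((N-1)*(N-3)/4) * x^2/(1-x)
      - (5*N-1)/2 * x + 5*x*(1-x)*(ℓ₁ x) - N*x^2*(ℓ₁ x) + x^2*(1-x)*((ℓ₁ x)^2 + 2 * deriv ℓ₁ x))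
    with hG
  have heq : ∀ x ∈ Ioo (0:ℝ) 1, G x = x * Qfun N ℓ₁ L₀ x := by
    intro x hx
    have hx0 : (0:ℝ) < x := hx.1
    have hx1 : (0:ℝ) < 1 - x := by linarith [hx.2]
    rw [Qfun_eq hℓ₁ hx, hG]
    field_simp
    ring
  have hc : ContinuousAt G 0 := by
    have h1 : ContinuousAt L₀ 0 := (hL₀ 0 (by norm_num)).continuousAt
    have h2 : ContinuousAt ℓ₁ 0 := (hℓ₁ 0 (by norm_num)).continuousAt
    have h3 : ContinuousAt (deriv ℓ₁) 0 := ((hℓ₁.deriv) 0 (by norm_num)).continuousAt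
    rw [hG]
    have hne : (1:ℝ) - 0 ≠ 0 := by norm_num
    fun_prop (disch := exact hne)
  have hG0 : G 0 = 1/2 := by rw [hG]; norm_num
  have hGt : Tendsto G (𝓝[Ioo (0:ℝ) 1] 0) (𝓝 (1/2)) := by
    rw [← hG0]
    exact hc.continuousWithinAt.tendsto
  exact tendsto_nhdsWithin_congr heq hGt

lemma tendsto_yQ {N : ℝ} {ℓ₁ L₀ : ℝ → ℝ} (hℓ₁ : AnalyticOnNhd ℝ ℓ₁ (Icc 0 1))
    (hL₀ : AnalyticOnNhd ℝ L₀ (Icc 0 1)) :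
    Tendsto (fun x => (1-x) * Qfun N ℓ₁ L₀ x) (𝓝[Ioo (0:ℝ) 1] 1)
      (𝓝 ((N-1)*(N-3)/16)) := by
  set H : ℝ → ℝ := fun x => (1-x) * L₀ x + (1/4) * (2*(1-x)^2/x + ((N-1)*(N-3)/4) * x
      - (5*N-1)/2 * (1-x) + 5*(1-x)^2*(ℓ₁ x) - N*x*(1-x)*(ℓ₁ x)
      + x*(1-x)^2*((ℓ₁ x)^2 + 2 * deriv ℓ₁ x)) with hH
  have heq : ∀ x ∈ Ioo (0:ℝ) 1, H x = (1-x) * Qfun N ℓ₁ L₀ x := by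
    intro x hx
    have hx0 : (0:ℝ) < x := hx.1
    have hx1 : (0:ℝ) < 1 - x := by linarith [hx.2]
    rw [Qfun_eq hℓ₁ hx, hH]
    field_simp
    ring
  have hc : ContinuousAt H 1 := by
    have h1 : ContinuousAt L₀ 1 := (hL₀ 1 (by norm_num)).continuousAt
    have h2 : ContinuousAt ℓ₁ 1 := (hℓ₁ 1 (by norm_num)).continuousAt
    have h3 : ContinuousAt (deriv ℓ₁) 1 := ((hℓ₁.deriv) 1 (by norm_num)).continuousAt
    rw [hH]
    have hne : (1:ℝ) ≠ 0 := by norm_num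
    fun_prop (disch := exact hne)
  have hH0 : H 1 = (N-1)*(N-3)/16 := by rw [hH]; norm_num; ring
  have hHt : Tendsto H (𝓝[Ioo (0:ℝ) 1] 1) (𝓝 ((N-1)*(N-3)/16)) := by
    rw [← hH0]
    exact hc.continuousWithinAt.tendsto
  exact tendsto_nhdsWithin_congr heq hHt

lemma sin_half_sq (t : ℝ) : Real.sin (t/2)^2 = (1 - Real.cos t)/2 := by
  have h1 := Real.sin_sq (t/2)
  have h2 := Real.cos_sq (t/2)
  rw [h1, h2, show 2*(t/2) = t by ring]
  ring

lemma tendsto_div_sin_half : Tendsto (fun t : ℝ => t / Real.sin (t/2)) (𝓝[≠] (0:ℝ)) (𝓝 2) := by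
  have hslope : Tendsto (fun h : ℝ => Real.sin h / h) (𝓝[≠] (0:ℝ)) (𝓝 1) := by
    have := Real.hasDerivAt_sin 0
    rw [hasDerivAt_iff_tendsto_slope] at this
    simpa [slope_fun_def, Real.sin_zero, Real.cos_zero, div_eq_inv_mul] using this
  have hinv : Tendsto (fun h : ℝ => h / Real.sin h) (𝓝[≠] (0:ℝ)) (𝓝 1) := by
    have := hslope.inv₀ one_ne_zero
    simp only [inv_div, inv_one] at this
    exact this
  have hhalf : Tendsto (fun t : ℝ => t/2) (𝓝[≠] (0:ℝ)) (𝓝[≠] (0:ℝ)) := by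
    apply tendsto_nhdsWithin_of_tendsto_nhds_of_eventually_within
    · simpa using (tendsto_id (x := (𝓝 (0:ℝ)))).div_const 2 |>.mono_left nhdsWithin_le_nhds
    · filter_upwards [self_mem_nhdsWithin] with t ht
      simp only [mem_compl_iff, mem_singleton_iff] at ht ⊢
      intro h; exact ht (by linarith)
  have hcomp : Tendsto (fun t : ℝ => (t/2) / Real.sin (t/2)) (𝓝[≠] (0:ℝ)) (𝓝 1) :=
    hinv.comp hhalf
  have := hcomp.const_mul 2
  norm_num at this
  convert this using 2 with t
  ring

lemma phimem : ∀ ξ ∈ Ioo (-(π/2)) (π/2), (1 + Real.sin ξ)/2 ∈ Ioo (0:ℝ) 1 := by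
  intro ξ hξ
  have h2 : Real.sin ξ < 1 := by
    have := Real.strictMonoOn_sin (a := ξ) (b := π/2) ⟨hξ.1.le, hξ.2.le⟩
      ⟨by linarith [hξ.1, hξ.2], le_rfl⟩ hξ.2
    simpa using this
  have h1 : -1 < Real.sin ξ := by
    have := Real.strictMonoOn_sin (a := -(π/2)) (b := ξ) ⟨le_rfl, by linarith [hξ.1, hξ.2]⟩
      ⟨hξ.1.le, hξ.2.le⟩ hξ.1
    simpa using this
  constructor <;> [linarith; linarith]

/-- (Asymptotics of the Liouville potential `q`.)
`(ξ+π/2)²q(ξ) → 2` as `ξ → (−π/2)⁺` and `(π/2−ξ)²q(ξ) → (N−1)(N−3)/4` as `ξ → (π/2)⁻`;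
moreover `(N−1)(N−3)/4 > 3/4` since `N > 4`. -/
theorem q_asymptotics (N : ℝ) (hN : 4 < N)
    (ℓ₁ L₀ : ℝ → ℝ)
    (hℓ₁ : AnalyticOnNhd ℝ ℓ₁ (Icc 0 1))
    (hL₀ : AnalyticOnNhd ℝ L₀ (Icc 0 1)) :
    Tendsto (fun ξ => (ξ + π/2) ^ 2 * qfun N ℓ₁ L₀ ξ)
        (nhdsWithin (-(π/2)) (Ioi (-(π/2)))) (nhds 2) ∧
    Tendsto (fun ξ => (π/2 - ξ) ^ 2 * qfun N ℓ₁ L₀ ξ)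
        (nhdsWithin (π/2) (Iio (π/2))) (nhds ((N - 1) * (N - 3) / 4)) ∧
    3/4 < (N - 1) * (N - 3) / 4 := by
  have hππ : -(π/2) < π/2 := by linarith [Real.pi_pos]
  refine ⟨?_, ?_, by nlinarith⟩
  · -- left endpoint
    rw [show (nhdsWithin (-(π/2)) (Ioi (-(π/2)))) = 𝓝[Ioo (-(π/2)) (π/2)] (-(π/2)) from
      (nhdsWithin_Ioo_eq_nhdsGT hππ).symm]
    have hφ : Tendsto (fun ξ => (1 + Real.sin ξ)/2) (𝓝[Ioo (-(π/2)) (π/2)] (-(π/2)))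
        (𝓝[Ioo (0:ℝ) 1] 0) := by
      apply tendsto_nhdsWithin_of_tendsto_nhds_of_eventually_within
      · have hcont : Continuous (fun ξ : ℝ => (1 + Real.sin ξ)/2) := by fun_prop
        have h0 : (1 + Real.sin (-(π/2)))/2 = 0 := by simp
        have := hcont.continuousAt (x := -(π/2)).tendsto.mono_left
          (nhdsWithin_le_nhds (s := Ioo (-(π/2)) (π/2)))
        rwa [h0] at this
      · filter_upwards [self_mem_nhdsWithin] with ξ hξ using phimem ξ hξ
    have hmain : Tendsto (fun ξ => ((1 + Real.sin ξ)/2) * Qfun N ℓ₁ L₀ ((1 + Real.sin ξ)/2))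
        (𝓝[Ioo (-(π/2)) (π/2)] (-(π/2))) (𝓝 (1/2)) := (tendsto_xQ hℓ₁ hL₀).comp hφ
    have ht : Tendsto (fun ξ => ξ + π/2) (𝓝[Ioo (-(π/2)) (π/2)] (-(π/2))) (𝓝[≠] (0:ℝ)) := by
      apply tendsto_nhdsWithin_of_tendsto_nhds_of_eventually_within
      · have : Tendsto (fun ξ : ℝ => ξ + π/2) (𝓝 (-(π/2))) (𝓝 (-(π/2) + π/2)) :=
          (continuous_id.add continuous_const).continuousAt
        simpa using this.mono_left nhdsWithin_le_nhds
      · filter_upwards [self_mem_nhdsWithin] with ξ hξ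
        simp only [mem_compl_iff, mem_singleton_iff]
        have := hξ.1
        intro h; linarith
    have hratio : Tendsto (fun ξ => ((ξ + π/2) / Real.sin ((ξ + π/2)/2))^2)
        (𝓝[Ioo (-(π/2)) (π/2)] (-(π/2))) (𝓝 4) := by
      have := (tendsto_div_sin_half.comp ht).pow 2
      norm_num at this
      exact this
    have hprod := hratio.mul hmain
    norm_num at hprod
    apply hprod.congr'
    filter_upwards [self_mem_nhdsWithin] with ξ hξ
    have hφx := phimem ξ hξ
    have hs : Real.sin ((ξ + π/2)/2)^2 = (1 + Real.sin ξ)/2 := by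
      rw [sin_half_sq, Real.cos_add_pi_div_two]
      ring
    have hsne : Real.sin ((ξ + π/2)/2) ≠ 0 := by
      intro h
      rw [h] at hs
      simp at hs
      have := hφx.1
      rw [← hs] at this
      norm_num at this
    show ((ξ + π/2) / Real.sin ((ξ + π/2)/2))^2
        * (((1 + Real.sin ξ)/2) * Qfun N ℓ₁ L₀ ((1 + Real.sin ξ)/2))
        = (ξ + π/2)^2 * qfun N ℓ₁ L₀ ξ
    have h2 := pow_ne_zero 2 hsne
    rw [qfun, ← hs, div_pow, ← mul_assoc, div_mul_cancel₀ _ h2]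
  · -- right endpoint
    rw [show (nhdsWithin (π/2) (Iio (π/2))) = 𝓝[Ioo (-(π/2)) (π/2)] (π/2) from
      (nhdsWithin_Ioo_eq_nhdsLT hππ).symm]
    have hφ : Tendsto (fun ξ => (1 + Real.sin ξ)/2) (𝓝[Ioo (-(π/2)) (π/2)] (π/2))
        (𝓝[Ioo (0:ℝ) 1] 1) := by
      apply tendsto_nhdsWithin_of_tendsto_nhds_of_eventually_within
      · have hcont : Continuous (fun ξ : ℝ => (1 + Real.sin ξ)/2) := by fun_prop
        have h0 : (1 + Real.sin (π/2))/2 = 1 := by simp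
        have := hcont.continuousAt (x := π/2).tendsto.mono_left
          (nhdsWithin_le_nhds (s := Ioo (-(π/2)) (π/2)))
        rwa [h0] at this
      · filter_upwards [self_mem_nhdsWithin] with ξ hξ using phimem ξ hξ
    have hmain : Tendsto (fun ξ => (1 - (1 + Real.sin ξ)/2) * Qfun N ℓ₁ L₀ ((1 + Real.sin ξ)/2))
        (𝓝[Ioo (-(π/2)) (π/2)] (π/2)) (𝓝 ((N-1)*(N-3)/16)) := (tendsto_yQ hℓ₁ hL₀).comp hφ
    have ht : Tendsto (fun ξ => π/2 - ξ) (𝓝[Ioo (-(π/2)) (π/2)] (π/2)) (𝓝[≠] (0:ℝ)) := by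
      apply tendsto_nhdsWithin_of_tendsto_nhds_of_eventually_within
      · have : Tendsto (fun ξ : ℝ => π/2 - ξ) (𝓝 (π/2)) (𝓝 (π/2 - π/2)) :=
          (continuous_const.sub continuous_id).continuousAt
        simpa using this.mono_left nhdsWithin_le_nhds
      · filter_upwards [self_mem_nhdsWithin] with ξ hξ
        simp only [mem_compl_iff, mem_singleton_iff]
        have := hξ.2
        intro h; linarith
    have hratio : Tendsto (fun ξ => ((π/2 - ξ) / Real.sin ((π/2 - ξ)/2))^2)
        (𝓝[Ioo (-(π/2)) (π/2)] (π/2)) (𝓝 4) := by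
      have := (tendsto_div_sin_half.comp ht).pow 2
      norm_num at this
      exact this
    have hprod := hratio.mul hmain
    rw [show (4:ℝ) * ((N-1)*(N-3)/16) = (N-1)*(N-3)/4 by ring] at hprod
    apply hprod.congr'
    filter_upwards [self_mem_nhdsWithin] with ξ hξ
    have hφx := phimem ξ hξ
    have hs : Real.sin ((π/2 - ξ)/2)^2 = 1 - (1 + Real.sin ξ)/2 := by
      rw [sin_half_sq, Real.cos_pi_div_two_sub]
      ring
    have hsne : Real.sin ((π/2 - ξ)/2) ≠ 0 := by
      intro h
      rw [h] at hs
      have h2 := hφx.2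
      simp at hs
      nlinarith
    show ((π/2 - ξ) / Real.sin ((π/2 - ξ)/2))^2
        * ((1 - (1 + Real.sin ξ)/2) * Qfun N ℓ₁ L₀ ((1 + Real.sin ξ)/2))
        = (π/2 - ξ)^2 * qfun N ℓ₁ L₀ ξ
    have h2 := pow_ne_zero 2 hsne
    rw [qfun, ← hs, div_pow, ← mul_assoc, div_mul_cancel₀ _ h2]
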